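/- arXiv:2409.11842 — 2 statements merged into one kernel-verified Lean document; each statement's English description precedes it below -/
import Mathlib

section
/- For r > 1, as n → ∞ the quantity (1/(n+2))·(1/(n+1))·(1 + (n r^{n+1}+1)/(r^{n+1}−1) − 1/(r−1)) tends to 0 but exceeds (1/n)·(1/(n+1))·(n − (n r^{n+1}+1)/(r^{n+1}−1) + 1/(r−1)) for all sufficiently large n. -/
/-!
Put `a = 1 / (r - 1)` and `B n = (n + 1) / (r ^ (n + 1) - 1)`, which is nonnegative and tends
to `0` because `r ^ n` outgrows `n`. Then `(n r ^ (n + 1) + 1) / (r ^ (n + 1) - 1) = n + B n`, so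
`L n = 1 / (n + 2) + (B n - a) / ((n + 1) (n + 2)) → 0`, and
`L n - R n = (n + 2 (B n - a)) / (n (n + 2))`, which is positive as soon as `n > 2 a`.
-/

open Filter Topology

lemma tendsto_natCast_div_pow_sub_one {r : ℝ} (hr : 1 < r) :
    Tendsto (fun n : ℕ => (n : ℝ) / (r ^ n - 1)) atTop (𝓝 0) := by
  have hpow : Tendsto (fun n : ℕ => r ^ n) atTop atTop := tendsto_pow_atTop_atTop_of_one_lt hr
  have hlim : Tendsto (fun n : ℕ => (n : ℝ) / r ^ n / (1 - (r ^ n)⁻¹)) atTop (𝓝 (0 / (1 - 0))) :=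
    ((tendsto_pow_const_div_const_pow_of_one_lt 1 hr).congr fun n => by rw [pow_one]).div
      (tendsto_const_nhds.sub (tendsto_inv_atTop_zero.comp hpow)) (by norm_num)
  rw [zero_div] at hlim
  refine hlim.congr fun n => ?_
  have hrn : r ^ n ≠ 0 := by positivity
  rw [div_div, mul_sub, mul_one, mul_inv_cancel₀ hrn]

lemma mul_add_one_div_sub_one {x : ℝ} (hx : x ≠ 1) (t : ℝ) :
    (t * x + 1) / (x - 1) = t + (t + 1) / (x - 1) := by
  have : x - 1 ≠ 0 := sub_ne_zero.mpr hx
  field_simp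
  ring

lemma bfy_lhs_sub_rhs {t : ℝ} (ht : 0 < t) (a b : ℝ) :
    1 / (t + 2) * (1 / (t + 1)) * (1 + (t + b) - a) - 1 / t * (1 / (t + 1)) * (t - (t + b) + a)
      = (t + 2 * (b - a)) / (t * (t + 2)) := by
  field_simp
  ring

/-- For r > 1, the LHS of condition (BFY) for the geometric probe tends to 0 as n → ∞,
yet exceeds the RHS for all sufficiently large n. -/
theorem geometric_probe_bfy_condition (r : ℝ) (hr : 1 < r) :
    let L : ℕ → ℝ := fun n => (1 / ((n : ℝ) + 2)) * (1 / ((n : ℝ) + 1)) *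
      (1 + ((n : ℝ) * r ^ (n + 1) + 1) / (r ^ (n + 1) - 1) - 1 / (r - 1))
    let R : ℕ → ℝ := fun n => (1 / (n : ℝ)) * (1 / ((n : ℝ) + 1)) *
      ((n : ℝ) - ((n : ℝ) * r ^ (n + 1) + 1) / (r ^ (n + 1) - 1) + 1 / (r - 1))
    Tendsto L atTop (nhds 0) ∧ ∀ᶠ n : ℕ in atTop, R n < L n := by
  intro L R
  have hpow : ∀ n : ℕ, 1 < r ^ (n + 1) := fun n => one_lt_pow₀ hr n.succ_ne_zero
  set a := 1 / (r - 1)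
  set B : ℕ → ℝ := fun n => ((n : ℝ) + 1) / (r ^ (n + 1) - 1)
  have hQ (n : ℕ) : ((n : ℝ) * r ^ (n + 1) + 1) / (r ^ (n + 1) - 1) = n + B n :=
    mul_add_one_div_sub_one (hpow n).ne' n
  have hB : Tendsto B atTop (𝓝 0) := by
    have := (tendsto_natCast_div_pow_sub_one hr).comp (tendsto_add_atTop_nat 1)
    simpa [Function.comp_def] using this
  have hL (n : ℕ) : L n = 1 / ((n : ℝ) + 2) + (B n - a) / (((n : ℝ) + 2) * ((n : ℝ) + 1)) := by
    simp only [L, hQ]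
    field_simp
    ring
  constructor
  · have hn2 : Tendsto (fun n : ℕ => (n : ℝ) + 2) atTop atTop :=
      tendsto_atTop_add_const_right _ 2 tendsto_natCast_atTop_atTop
    have hn1 : Tendsto (fun n : ℕ => (n : ℝ) + 1) atTop atTop :=
      tendsto_atTop_add_const_right _ 1 tendsto_natCast_atTop_atTop
    rw [← add_zero (0 : ℝ)]
    exact ((tendsto_const_nhds.div_atTop hn2).add
      ((hB.sub_const a).div_atTop (hn2.atTop_mul_atTop₀ hn1))).congr fun n => (hL n).symm
  · filter_upwards [tendsto_natCast_atTop_atTop.eventually_gt_atTop (2 * a),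
      eventually_gt_atTop 0] with n hn hn0
    have hnR : (0 : ℝ) < n := Nat.cast_pos.mpr hn0
    have hB0 : 0 ≤ B n := div_nonneg (by positivity) (by linarith [hpow n])
    rw [← sub_pos]
    simp only [L, R, hQ]
    rw [bfy_lhs_sub_rhs hnR]
    apply div_pos <;> nlinarith
end

section
/- For n = 2j and the half-Dicke probe state (a = 0), the maximal global-estimation fidelity R_n = ((n+1)/(n+2))·(n/2 + 1)/(n+1) = (n/2+1)/(n+2) converges to 1/2 as n → ∞, so the error 4(1 − R_n) converges to 2 > 0, while the inverse SLD Fisher information 1/(2n(n+2)) converges to 0 at rate n^{−2}. -/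
open Filter Asymptotics

/-! The fidelity `(n/2 + 1)/(n + 2)` is identically `1/2`, its numerator being half its
denominator, so `R n` and `4 (1 - R n) = 2` are constant sequences; meanwhile
`2n(n + 2) ≥ n²` bounds the inverse Fisher information by `n⁻²`. -/

theorem half_add_one_div_add_two {K : Type*} [Field K] [NeZero (2 : K)] {x : K}
    (hx : x + 2 ≠ 0) : (x / 2 + 1) / (x + 2) = 1 / 2 := by
  rw [div_eq_div_iff hx two_ne_zero]
  field_simp

theorem one_div_two_mul_mul_add_two_le_inv_sq {x : ℝ} (hx : 0 < x) :
    1 / (2 * x * (x + 2)) ≤ (x ^ 2)⁻¹ := by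
  rw [one_div]
  exact inv_anti₀ (by positivity) (by nlinarith)

theorem one_div_two_mul_mul_add_two_isBigO_inv_sq :
    (fun n : ℕ => 1 / (2 * (n : ℝ) * ((n : ℝ) + 2))) =O[atTop] fun n : ℕ => ((n : ℝ) ^ 2)⁻¹ := by
  refine IsBigO.of_bound 1 ?_
  filter_upwards [eventually_gt_atTop 0] with n hn
  have hn : (0 : ℝ) < n := Nat.cast_pos.mpr hn
  rw [Real.norm_of_nonneg (by positivity), Real.norm_of_nonneg (by positivity), one_mul]
  exact one_div_two_mul_mul_add_two_le_inv_sq hn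

theorem tendsto_inv_natCast_sq_atTop_zero :
    Tendsto (fun n : ℕ => ((n : ℝ) ^ 2)⁻¹) atTop (nhds 0) :=
  tendsto_inv_atTop_zero.comp ((tendsto_pow_atTop two_ne_zero).comp tendsto_natCast_atTop_atTop)

/-- For the half-Dicke probe state (a = 0, n = 2j), the maximal global-estimation
fidelity R_n = ((n+1)/(n+2))·(n/2+1)/(n+1) = (n/2+1)/(n+2) converges to 1/2, so the
error 4(1−R_n) converges to 2 > 0, while the inverse SLD Fisher information
1/(2n(n+2)) converges to 0 at rate n^{−2}. -/
theorem half_dicke_loses_heisenberg_scaling :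
    let R : ℕ → ℝ := fun n => ((n : ℝ) / 2 + 1) / ((n : ℝ) + 2)
    (∀ n : ℕ, 0 < n →
        R n = (((n : ℝ) + 1) / ((n : ℝ) + 2)) * (((n : ℝ) / 2 + 1) / ((n : ℝ) + 1)))
    ∧ Tendsto R atTop (nhds (1 / 2))
    ∧ Tendsto (fun n : ℕ => 4 * (1 - R n)) atTop (nhds 2)
    ∧ (0 : ℝ) < 2
    ∧ Tendsto (fun n : ℕ => 1 / (2 * (n : ℝ) * ((n : ℝ) + 2))) atTop (nhds 0)
    ∧ (fun n : ℕ => 1 / (2 * (n : ℝ) * ((n : ℝ) + 2))) =O[atTop]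
        fun n : ℕ => ((n : ℝ) ^ 2)⁻¹ := by
  intro R
  have hR : ∀ n, R n = 1 / 2 := fun n => half_add_one_div_add_two (by positivity)
  refine ⟨fun n _ => (div_mul_div_cancel₀' (by positivity) _ _).symm,
    tendsto_const_nhds.congr fun n => (hR n).symm,
    tendsto_const_nhds.congr fun n => by rw [hR]; norm_num,
    two_pos,
    one_div_two_mul_mul_add_two_isBigO_inv_sq.trans_tendsto tendsto_inv_natCast_sq_atTop_zero,
    one_div_two_mul_mul_add_two_isBigO_inv_sq⟩
end
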